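/- Let g be a finite-dimensional real Lie algebra with a biinvariant inner product Q, let s ⊊ g be a proper subalgebra, and let l₁, l₂ ⊆ s be subalgebras such that (ad_y ∘ ad_x)|_{s⊥} = 0 for all x ∈ l₁, y ∈ l₂. Suppose W ⊆ s⊥ is an ad_s-invariant subspace with [l₁, W] = W. Then [l₂, W] = 0 and moreover [l₂, [W, g]] = 0. -/

import Mathlib

/-- The span of all brackets `⁅a, b⁆` with `a ∈ A`, `b ∈ B`. -/
def bracketSpan {g : Type*} [LieRing g] [LieAlgebra ℝ g]
    (A B : Submodule ℝ g) : Submodule ℝ g :=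
  Submodule.span ℝ {z | ∃ a ∈ A, ∃ b ∈ B, z = ⁅a, b⁆}

/-!
Every `w ∈ W` is a sum of brackets `⁅x, v⁆` with `x ∈ l₁` and `v ∈ W ⊆ s⊥`, so `ad_y` kills `W`
for `y ∈ l₂`. For the second claim split `u ∈ g` along `g = s ⊕ s⊥`. If `u ∈ s`, then
`⁅w, u⁆ ∈ W` is killed by `ad_y`. If `u ∈ s⊥`, invariance of `Q` puts `⁅y, ⁅w, u⁆⁆` in `s⊥`,
while the Jacobi identity applied to `w = ⁅x, v⁆`, together with `ad_y ∘ ad_x = 0` on `s⊥`,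
puts it in `s`; so it vanishes.
-/

open LinearMap (BilinForm)

theorem LinearMap.BilinForm.isCompl_orthogonal_of_anisotropic {K V : Type*} [Field K]
    [AddCommGroup V] [Module K V] [FiniteDimensional K V] {Q : BilinForm K V} (hrefl : Q.IsRefl)
    (hQ : ∀ x, Q x x = 0 → x = 0) (s : Submodule K V) : IsCompl s (Q.orthogonal s) :=
  (isCompl_orthogonal_iff_disjoint hrefl).2 <|
    Submodule.disjoint_def.2 fun x hxs hxt => hQ x (hxt x hxs)

section

variable {R L : Type*} [CommRing R] [LieRing L] [LieAlgebra R L] {Q : BilinForm R L}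

theorem LinearMap.BilinForm.apply_lie_lie_of_invariant
    (hQ : ∀ z x y : L, Q ⁅z, x⁆ y + Q x ⁅z, y⁆ = 0) (a y w u : L) :
    Q a ⁅y, ⁅w, u⁆⁆ = Q ⁅w, ⁅y, a⁆⁆ u := by
  linear_combination hQ y a ⁅w, u⁆ - hQ w ⁅y, a⁆ u

theorem lie_lie_mem_orthogonal_of_invariant (hQ : ∀ z x y : L, Q ⁅z, x⁆ y + Q x ⁅z, y⁆ = 0)
    {s : Submodule R L} {y w : L} (h : ∀ n ∈ s, ⁅w, ⁅y, n⁆⁆ = 0) (u : L) :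
    ⁅y, ⁅w, u⁆⁆ ∈ Q.orthogonal s := fun n hn => by
  rw [Q.apply_lie_lie_of_invariant hQ, h n hn, map_zero, LinearMap.zero_apply]

theorem lie_lie_mem_of_codisjoint {s t : Submodule R L} (hst : Codisjoint s t)
    (hs : ∀ x ∈ s, ∀ y ∈ s, ⁅x, y⁆ ∈ s) {x y : L} (hx : x ∈ s) (hy : y ∈ s)
    (hxy : ∀ v ∈ t, ⁅y, ⁅x, v⁆⁆ = 0) (u : L) : ⁅y, ⁅x, u⁆⁆ ∈ s := by
  obtain ⟨a, ha, b, hb, rfl⟩ := Submodule.mem_sup.1 (hst.eq_top ▸ Submodule.mem_top : u ∈ s ⊔ t)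
  rw [lie_add, lie_add, hxy b hb, add_zero]
  exact hs y hy _ (hs x hx a ha)

end

section BracketSpan

variable {L : Type*} [LieRing L] [LieAlgebra ℝ L]

theorem bracketSpan_le_iff {A B N : Submodule ℝ L} :
    bracketSpan A B ≤ N ↔ ∀ a ∈ A, ∀ b ∈ B, ⁅a, b⁆ ∈ N := by
  rw [bracketSpan, Submodule.span_le]
  exact ⟨fun h a ha b hb => h ⟨a, ha, b, hb, rfl⟩, fun h _ ⟨a, ha, b, hb, hz⟩ => hz ▸ h a ha b hb⟩

theorem bracketSpan_eq_bot_iff {A B : Submodule ℝ L} :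
    bracketSpan A B = ⊥ ↔ ∀ a ∈ A, ∀ b ∈ B, ⁅a, b⁆ = 0 := by
  simp only [← le_bot_iff, bracketSpan_le_iff, Submodule.mem_bot]

variable {s t l₁ W : Submodule ℝ L} {y : L}

theorem lie_eq_zero_of_bracketSpan_eq_self (hl₁W : bracketSpan l₁ W = W) (hWt : W ≤ t)
    (hy : ∀ x ∈ l₁, ∀ v ∈ t, ⁅y, ⁅x, v⁆⁆ = 0) {w : L} (hw : w ∈ W) : ⁅y, w⁆ = 0 := by
  have hker : W ≤ LinearMap.ker (LieAlgebra.ad ℝ L y) :=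
    hl₁W.ge.trans <| bracketSpan_le_iff.2 fun x hx v hv => by simpa using hy x hx v (hWt hv)
  simpa using hker hw

theorem lie_lie_mem_of_bracketSpan_eq_self (hst : Codisjoint s t)
    (hs : ∀ x ∈ s, ∀ y ∈ s, ⁅x, y⁆ ∈ s) (hl₁s : l₁ ≤ s) (hys : y ∈ s)
    (hy : ∀ x ∈ l₁, ∀ v ∈ t, ⁅y, ⁅x, v⁆⁆ = 0) (hyW : ∀ w ∈ W, ⁅y, w⁆ = 0)
    (hl₁W : bracketSpan l₁ W = W) {b : L} (hb : b ∈ t) {w : L} (hw : w ∈ W) :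
    ⁅y, ⁅b, w⁆⁆ ∈ s := by
  have hker : W ≤ s.comap (LieAlgebra.ad ℝ L y ∘ₗ LieAlgebra.ad ℝ L b) := by
    refine hl₁W.ge.trans <| bracketSpan_le_iff.2 fun x hx v hv => ?_
    have hybx : ⁅y, ⁅b, x⁆⁆ = 0 := by rw [← lie_skew b x, lie_neg, hy x hx b hb, neg_zero]
    suffices ⁅y, ⁅b, ⁅x, v⁆⁆⁆ ∈ s by simpa using this
    rw [leibniz_lie b, lie_add, leibniz_lie y, hybx, zero_lie, hyW v hv, lie_zero, zero_add,
      zero_add]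
    exact lie_lie_mem_of_codisjoint hst hs (hl₁s hx) hys (hy x hx) _
  simpa using hker hw

theorem lie_lie_eq_zero_of_isCompl {Q : BilinForm ℝ L}
    (hQ : ∀ z x y : L, Q ⁅z, x⁆ y + Q x ⁅z, y⁆ = 0) (hcompl : IsCompl s (Q.orthogonal s))
    (hWinv : ∀ x ∈ s, ∀ w ∈ W, ⁅x, w⁆ ∈ W) (hyW : ∀ w ∈ W, ⁅y, w⁆ = 0)
    (hyt : ∀ b ∈ Q.orthogonal s, ∀ w ∈ W, ⁅y, ⁅b, w⁆⁆ ∈ s) {w : L} (hw : w ∈ W) (u : L) :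
    ⁅y, ⁅w, u⁆⁆ = 0 := by
  have hwy : ⁅w, y⁆ = 0 := by rw [← lie_skew, hyW w hw, neg_zero]
  have hws : ∀ a ∈ s, ⁅w, a⁆ ∈ W := fun a ha => by
    rw [← lie_skew]
    exact W.neg_mem (hWinv a ha w hw)
  suffices ⊤ ≤ LinearMap.ker (LieAlgebra.ad ℝ L y ∘ₗ LieAlgebra.ad ℝ L w) by
    simpa using this (Submodule.mem_top (x := u))
  rw [← hcompl.sup_eq_top, sup_le_iff]
  refine ⟨fun a ha => by simpa using hyW _ (hws a ha), fun b hb => ?_⟩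
  have hmem : ⁅y, ⁅w, b⁆⁆ ∈ s := by
    rw [← lie_skew w b, lie_neg]
    exact s.neg_mem (hyt b hb w hw)
  have hperp : ⁅y, ⁅w, b⁆⁆ ∈ Q.orthogonal s :=
    lie_lie_mem_orthogonal_of_invariant hQ (fun n hn => by
      rw [leibniz_lie, hwy, zero_lie, zero_add, hyW _ (hws n hn)]) b
  simpa using Submodule.disjoint_def.1 hcompl.disjoint _ hmem hperp

end BracketSpan

theorem bracket_l2_W_and_bracket_l2_W_g_eq_bot_general
    (g : Type*) [LieRing g] [LieAlgebra ℝ g] [FiniteDimensional ℝ g]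
    (Q : LinearMap.BilinForm ℝ g)
    (hsymm : ∀ x y : g, Q x y = Q y x)
    (hpos : ∀ x : g, x ≠ 0 → 0 < Q x x)
    (hbi : ∀ z x y : g, Q ⁅z, x⁆ y + Q x ⁅z, y⁆ = 0)
    (s l₁ l₂ W : Submodule ℝ g)
    (hs : ∀ x ∈ s, ∀ y ∈ s, ⁅x, y⁆ ∈ s)
    (hl₁s : l₁ ≤ s) (hl₂s : l₂ ≤ s)
    (hvanish : ∀ x ∈ l₁, ∀ y ∈ l₂, ∀ v ∈ Q.orthogonal s, ⁅y, ⁅x, v⁆⁆ = 0)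
    (hWperp : W ≤ Q.orthogonal s)
    (hWinv : ∀ x ∈ s, ∀ w ∈ W, ⁅x, w⁆ ∈ W)
    (hl₁W : bracketSpan l₁ W = W) :
    bracketSpan l₂ W = ⊥ ∧ bracketSpan l₂ (bracketSpan W ⊤) = ⊥ := by
  have hcompl : IsCompl s (Q.orthogonal s) :=
    Q.isCompl_orthogonal_of_anisotropic (fun x y h => (hsymm y x).trans h)
      (fun x hx => not_not.1 fun h => (hpos x h).ne' hx) s
  have hl₂W : ∀ y ∈ l₂, ∀ w ∈ W, ⁅y, w⁆ = 0 := fun y hy _ hw =>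
    lie_eq_zero_of_bracketSpan_eq_self hl₁W hWperp (fun x hx => hvanish x hx y hy) hw
  have hl₂WL : ∀ y ∈ l₂, ∀ w ∈ W, ∀ u : g, ⁅y, ⁅w, u⁆⁆ = 0 := fun y hy _ hw =>
    lie_lie_eq_zero_of_isCompl hbi hcompl hWinv (hl₂W y hy)
      (fun _ hb _ hw' => lie_lie_mem_of_bracketSpan_eq_self hcompl.codisjoint hs hl₁s (hl₂s hy)
        (fun x hx => hvanish x hx y hy) (hl₂W y hy) hl₁W hb hw') hw
  refine ⟨bracketSpan_eq_bot_iff.2 hl₂W, bracketSpan_eq_bot_iff.2 fun y hy v hv => ?_⟩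
  have hker : bracketSpan W ⊤ ≤ LinearMap.ker (LieAlgebra.ad ℝ g y) :=
    bracketSpan_le_iff.2 fun w hw u _ => by simpa using hl₂WL y hy w hw u
  simpa using hker hv

/-- Let `g` be a finite-dimensional real Lie algebra with a biinvariant inner product `Q`,
`s ⊊ g` a proper subalgebra, `l₁, l₂ ⊆ s` subalgebras with `(ad_y ∘ ad_x)|_{s⊥} = 0`
for all `x ∈ l₁`, `y ∈ l₂`, and `W ⊆ s⊥` an `ad_s`-invariant subspace with `[l₁, W] = W`.
Then `[l₂, W] = 0` and `[l₂, [W, g]] = 0`. -/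
theorem bracket_l2_W_and_bracket_l2_W_g_eq_bot
    (g : Type*) [LieRing g] [LieAlgebra ℝ g] [FiniteDimensional ℝ g]
    (Q : LinearMap.BilinForm ℝ g)
    (hsymm : ∀ x y : g, Q x y = Q y x)
    (hpos : ∀ x : g, x ≠ 0 → 0 < Q x x)
    (hbi : ∀ z x y : g, Q ⁅z, x⁆ y + Q x ⁅z, y⁆ = 0)
    (s l₁ l₂ W : Submodule ℝ g)
    (hproper : s ≠ ⊤)
    (hs : ∀ x ∈ s, ∀ y ∈ s, ⁅x, y⁆ ∈ s)
    (hl₁s : l₁ ≤ s) (hl₂s : l₂ ≤ s)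
    (hl₁ : ∀ x ∈ l₁, ∀ y ∈ l₁, ⁅x, y⁆ ∈ l₁)
    (hl₂ : ∀ x ∈ l₂, ∀ y ∈ l₂, ⁅x, y⁆ ∈ l₂)
    (hvanish : ∀ x ∈ l₁, ∀ y ∈ l₂, ∀ v ∈ Q.orthogonal s, ⁅y, ⁅x, v⁆⁆ = 0)
    (hWperp : W ≤ Q.orthogonal s)
    (hWinv : ∀ x ∈ s, ∀ w ∈ W, ⁅x, w⁆ ∈ W)
    (hl₁W : bracketSpan l₁ W = W) :
    bracketSpan l₂ W = ⊥ ∧ bracketSpan l₂ (bracketSpan W ⊤) = ⊥ :=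
  bracket_l2_W_and_bracket_l2_W_g_eq_bot_general g Q hsymm hpos hbi s l₁ l₂ W hs hl₁s hl₂s hvanish
    hWperp hWinv hl₁W
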